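/- arXiv:2404.18205 — 5 statements merged into one kernel-verified Lean document; each statement's English description precedes it below -/
import Mathlib

section
/- Let M be a preference model, M' a model rearranging M with prototype function prot, and φ a formula with M ⊭ φ. If conditions (i)–(iv) hold — (i) some v' ∈ W' has M, prot(v') ⊭ φ; (ii) for each subformula □β of φ not validated by M there is v' ∈ W' with M, prot(v') ⊭ β; (iii) for each subformula ◯(γ/α) of φ not validated by M there is v' ∈ W' with prot(v') ∈ max_≻(⟦α⟧_M) \ ⟦γ⟧_M and prot(u') ≻ prot(v') for all u' ≻' v'; (iv) for each w' ∈ W' and each subformula ◯(γ/α) validated by M, if some u ≻ prot(w') satisfies M, u ⊨ α then some s' ≻' w' satisfies M, prot(s') ⊨ α — then for every w' ∈ W' and every subformula ψ of φ, M', w' ⊨ ψ iff M, prot(w') ⊨ ψ; in particular M' ⊭ φ. -/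
/-- Formulas of Åqvist's dyadic deontic language. -/
inductive PForm (V : Type) : Type
  | var : V → PForm V
  | neg : PForm V → PForm V
  | conj : PForm V → PForm V → PForm V
  | box : PForm V → PForm V
  | ob : PForm V → PForm V → PForm V   -- `ob γ α` is ◯(γ/α)

/-- Strict version of a binary relation: `a ≻ b` iff `a ⪰ b` and `¬ b ⪰ a`. -/
def strictRel {W : Type} (r : W → W → Prop) (a b : W) : Prop := r a b ∧ ¬ r b a

/-- ≻-maximal elements of a set `U`. -/
def maxSet {W : Type} (r : W → W → Prop) (U : Set W) : Set W :=
  {v | v ∈ U ∧ ¬ ∃ u ∈ U, strictRel r u v}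

/-- A preference model. -/
structure PrefModel (V : Type) : Type 1 where
  W : Type
  rel : W → W → Prop
  val : V → Set W

/-- Truth set of a formula in a preference model. -/
def truthSet {V : Type} (M : PrefModel V) : PForm V → Set M.W
  | .var x => M.val x
  | .neg ψ => (truthSet M ψ)ᶜ
  | .conj ψ₁ ψ₂ => truthSet M ψ₁ ∩ truthSet M ψ₂
  | .box β => {_w | truthSet M β = Set.univ}
  | .ob γ α => {_w | maxSet M.rel (truthSet M α) ⊆ truthSet M γ}

/-- A model validates a formula when it is true at all worlds. -/
def valid {V : Type} (M : PrefModel V) (φ : PForm V) : Prop :=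
  truthSet M φ = Set.univ

/-- Limitedness of a preference model. -/
def Limited {V : Type} (M : PrefModel V) : Prop :=
  ∀ α : PForm V, (truthSet M α).Nonempty → (maxSet M.rel (truthSet M α)).Nonempty

/-- Smoothness of a preference model. -/
def SmoothModel {V : Type} (M : PrefModel V) : Prop :=
  ∀ (α : PForm V) (w : M.W), w ∈ truthSet M α →
    ∃ u ∈ maxSet M.rel (truthSet M α), u = w ∨ strictRel M.rel u w

/-- Subformulas of a formula (including the formula itself). -/
def Subf {V : Type} : PForm V → Set (PForm V)
  | .var x => {.var x}
  | .neg ψ => insert (.neg ψ) (Subf ψ)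
  | .conj ψ₁ ψ₂ => insert (.conj ψ₁ ψ₂) (Subf ψ₁ ∪ Subf ψ₂)
  | .box β => insert (.box β) (Subf β)
  | .ob γ α => insert (.ob γ α) (Subf γ ∪ Subf α)

lemma mem_Subf_self {V : Type} (φ : PForm V) : φ ∈ Subf φ := by
  cases φ <;> simp [Subf]

lemma Subf_subset {V : Type} {φ ψ : PForm V} (h : ψ ∈ Subf φ) : Subf ψ ⊆ Subf φ := by
  induction φ with
  | var x => simp [Subf] at h; subst h; exact subset_rfl
  | neg ψ₁ ih =>
    simp only [Subf, Set.mem_insert_iff] at h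
    rcases h with h | h
    · subst h; exact subset_rfl
    · exact (ih h).trans (Set.subset_insert _ _)
  | conj ψ₁ ψ₂ ih1 ih2 =>
    simp only [Subf, Set.mem_insert_iff, Set.mem_union] at h
    rcases h with h | h | h
    · subst h; exact subset_rfl
    · exact (ih1 h).trans (Set.subset_union_left.trans (Set.subset_insert _ _))
    · exact (ih2 h).trans (Set.subset_union_right.trans (Set.subset_insert _ _))
  | box ψ₁ ih =>
    simp only [Subf, Set.mem_insert_iff] at h
    rcases h with h | h
    · subst h; exact subset_rfl
    · exact (ih h).trans (Set.subset_insert _ _)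
  | ob ψ₁ ψ₂ ih1 ih2 =>
    simp only [Subf, Set.mem_insert_iff, Set.mem_union] at h
    rcases h with h | h | h
    · subst h; exact subset_rfl
    · exact (ih1 h).trans (Set.subset_union_left.trans (Set.subset_insert _ _))
    · exact (ih2 h).trans (Set.subset_union_right.trans (Set.subset_insert _ _))

/-- Sufficient conditions (i)–(iv) for a rearranged model to agree with `M` on all
subformulas of `φ` and hence be a countermodel for `φ`. -/
theorem stmt8 {V : Type} (M M' : PrefModel V) (prot : M'.W → M.W)
    (hre : ∀ (w' : M'.W) (x : V), w' ∈ M'.val x ↔ prot w' ∈ M.val x)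
    (φ : PForm V) (hcm : ¬ valid M φ)
    (hi : ∃ v' : M'.W, prot v' ∉ truthSet M φ)
    (hii : ∀ β : PForm V, PForm.box β ∈ Subf φ → ¬ valid M (PForm.box β) →
      ∃ v' : M'.W, prot v' ∉ truthSet M β)
    (hiii : ∀ γ α : PForm V, PForm.ob γ α ∈ Subf φ → ¬ valid M (PForm.ob γ α) →
      ∃ v' : M'.W, prot v' ∈ maxSet M.rel (truthSet M α) \ truthSet M γ ∧
        ∀ u' : M'.W, strictRel M'.rel u' v' → strictRel M.rel (prot u') (prot v'))
    (hiv : ∀ (w' : M'.W) (γ α : PForm V), PForm.ob γ α ∈ Subf φ → valid M (PForm.ob γ α) →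
      (∃ u : M.W, strictRel M.rel u (prot w') ∧ u ∈ truthSet M α) →
      ∃ s' : M'.W, strictRel M'.rel s' w' ∧ prot s' ∈ truthSet M α) :
    (∀ (w' : M'.W) (ψ : PForm V), ψ ∈ Subf φ →
        (w' ∈ truthSet M' ψ ↔ prot w' ∈ truthSet M ψ)) ∧
      ¬ valid M' φ := by
  have key : ∀ (ψ : PForm V), ψ ∈ Subf φ →
      ∀ (w' : M'.W), (w' ∈ truthSet M' ψ ↔ prot w' ∈ truthSet M ψ) := by
    intro ψ
    induction ψ with
    | var x => intro _ w'; simpa [truthSet] using hre w' x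
    | neg ψ₁ ih =>
      intro hmem w'
      have h1 : ψ₁ ∈ Subf φ :=
        Subf_subset hmem (by simp [Subf, mem_Subf_self])
      simp [truthSet, ih h1 w']
    | conj ψ₁ ψ₂ ih1 ih2 =>
      intro hmem w'
      have h1 : ψ₁ ∈ Subf φ :=
        Subf_subset hmem (by simp [Subf]; exact Or.inr (Or.inl (mem_Subf_self _)))
      have h2 : ψ₂ ∈ Subf φ :=
        Subf_subset hmem (by simp [Subf]; exact Or.inr (Or.inr (mem_Subf_self _)))
      simp [truthSet, ih1 h1 w', ih2 h2 w']
    | box β ih =>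
      intro hmem w'
      have hβ : β ∈ Subf φ :=
        Subf_subset hmem (by simp [Subf, mem_Subf_self])
      simp only [truthSet, Set.mem_setOf_eq]
      constructor
      · intro hL
        by_contra hR
        have hnv : ¬ valid M (PForm.box β) := by
          intro hv
          have := (Set.eq_univ_iff_forall.mp hv) (prot w')
          simp only [truthSet, Set.mem_setOf_eq] at this
          exact hR this
        obtain ⟨v', hv'⟩ := hii β hmem hnv
        have : v' ∈ truthSet M' β := hL ▸ Set.mem_univ v'
        exact hv' ((ih hβ v').mp this)
      · intro hR
        apply Set.eq_univ_iff_forall.mpr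
        intro u'
        exact (ih hβ u').mpr (hR ▸ Set.mem_univ (prot u'))
    | ob γ α ihγ ihα =>
      intro hmem w'
      have hγ : γ ∈ Subf φ :=
        Subf_subset hmem (by simp [Subf]; exact Or.inr (Or.inl (mem_Subf_self _)))
      have hα : α ∈ Subf φ :=
        Subf_subset hmem (by simp [Subf]; exact Or.inr (Or.inr (mem_Subf_self _)))
      simp only [truthSet, Set.mem_setOf_eq]
      constructor
      · intro hL
        by_contra hR
        have hnv : ¬ valid M (PForm.ob γ α) := by
          intro hv
          have := (Set.eq_univ_iff_forall.mp hv) (prot w')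
          simp only [truthSet, Set.mem_setOf_eq] at this
          exact hR this
        obtain ⟨v', ⟨hvmax, hvγ⟩, hvstr⟩ := hiii γ α hmem hnv
        have hvα' : v' ∈ truthSet M' α := (ihα hα v').mpr hvmax.1
        have hvmax' : v' ∈ maxSet M'.rel (truthSet M' α) := by
          refine ⟨hvα', ?_⟩
          rintro ⟨u', hu'α, hu'str⟩
          exact hvmax.2 ⟨prot u', (ihα hα u').mp hu'α, hvstr u' hu'str⟩
        exact hvγ ((ihγ hγ v').mp (hL hvmax'))
      · intro hR
        intro z' hz'
        have hzα : prot z' ∈ truthSet M α := (ihα hα z').mp hz'.1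
        have hv : valid M (PForm.ob γ α) := by
          apply Set.eq_univ_iff_forall.mpr
          intro w
          simpa only [truthSet, Set.mem_setOf_eq] using hR
        have hzmax : prot z' ∈ maxSet M.rel (truthSet M α) := by
          refine ⟨hzα, ?_⟩
          rintro ⟨u, huα, hustr⟩
          obtain ⟨s', hs'str, hs'α⟩ := hiv z' γ α hmem hv ⟨u, hustr, huα⟩
          exact hz'.2 ⟨s', (ihα hα s').mpr hs'α, hs'str⟩
        exact (ihγ hγ z').mpr (hR hzmax)
  refine ⟨fun w' ψ hψ => key ψ hψ w', ?_⟩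
  obtain ⟨v', hv'⟩ := hi
  intro hv
  exact hv' ((key φ (mem_Subf_self φ) v').mp (hv ▸ Set.mem_univ v'))
end

section
/- The conditional excluded middle instance ◯(y/x) ∨ ◯(¬y/x) is valid in every preference model whose preference relation is total and antisymmetric, but it is falsified in some finite preference model with a transitive and total (non-antisymmetric) preference relation; hence ◯(y/x) ∨ ◯(¬y/x) is not a theorem of Åqvist's logic G. -/
/-- Disjunction, defined classically from ¬ and ∧. -/
def por {V : Type} (φ ψ : PForm V) : PForm V :=
  PForm.neg (PForm.conj (PForm.neg φ) (PForm.neg ψ))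

/-- The conditional excluded middle instance ◯(y/x) ∨ ◯(¬y/x). -/
def cem {V : Type} (x y : V) : PForm V :=
  por (PForm.ob (PForm.var y) (PForm.var x))
      (PForm.ob (PForm.neg (PForm.var y)) (PForm.var x))


/-!
CEM says that the best `x`-worlds either all satisfy `y` or all satisfy `¬y`. Under a total
antisymmetric preference there is at most one best `x`-world, so this holds trivially. Under the
universal preference relation (transitive, total, smooth, but not antisymmetric) every `x`-world
is best; with `x` true everywhere and `y` true at exactly one of two worlds, CEM fails.
-/

section MaxSet

variable {W : Type} {r : W → W → Prop}

lemma maxSet_subsingleton_of_total_of_antisymm (htot : ∀ a b, r a b ∨ r b a)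
    (hanti : ∀ a b, r a b → r b a → a = b) (U : Set W) : (maxSet r U).Subsingleton := by
  intro u hu v hv
  by_contra huv
  rcases htot u v with h | h
  · exact hv.2 ⟨u, hu.1, h, fun h' => huv (hanti u v h h')⟩
  · exact hu.2 ⟨v, hv.1, h, fun h' => huv (hanti v u h h').symm⟩

lemma maxSet_eq_self_of_forall_rel (hr : ∀ a b, r a b) (U : Set W) : maxSet r U = U :=
  Set.ext fun _ => ⟨fun h => h.1, fun h => ⟨h, fun ⟨u, _, _, hnot⟩ => hnot (hr _ u)⟩⟩

end MaxSet

lemma mem_truthSet_cem_iff {V : Type} (M : PrefModel V) (x y : V) (w : M.W) :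
    w ∈ truthSet M (cem x y) ↔
      maxSet M.rel (M.val x) ⊆ M.val y ∨ maxSet M.rel (M.val x) ⊆ (M.val y)ᶜ := by
  simp only [cem, por, truthSet, Set.mem_compl_iff, Set.mem_inter_iff, Set.mem_ofPred_eq]
  tauto

lemma valid_cem_of_total_of_antisymm {V : Type} (M : PrefModel V) (x y : V)
    (htot : ∀ a b : M.W, M.rel a b ∨ M.rel b a)
    (hanti : ∀ a b : M.W, M.rel a b → M.rel b a → a = b) : valid M (cem x y) := by
  refine Set.eq_univ_of_forall fun w => (mem_truthSet_cem_iff M x y w).2 ?_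
  have hsub := maxSet_subsingleton_of_total_of_antisymm htot hanti (M.val x)
  rcases hsub.eq_empty_or_singleton with hempty | ⟨m, hm⟩
  · exact Or.inl (hempty ▸ Set.empty_subset _)
  · rw [hm, Set.singleton_subset_iff, Set.singleton_subset_iff]
    exact em _

def universalPrefModel {V : Type} (y : V) : PrefModel V where
  W := Bool
  rel _ _ := True
  val v := {w | v = y → w = true}

lemma maxSet_universalPrefModel {V : Type} (y : V) (U : Set (universalPrefModel y).W) :
    maxSet (universalPrefModel y).rel U = U :=
  maxSet_eq_self_of_forall_rel (fun _ _ => trivial) U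

lemma smoothModel_universalPrefModel {V : Type} (y : V) :
    SmoothModel (universalPrefModel y) := fun α w hw =>
  ⟨w, by rwa [maxSet_universalPrefModel], Or.inl rfl⟩

lemma not_valid_cem_universalPrefModel {V : Type} {x y : V} (hxy : x ≠ y) :
    ¬ valid (universalPrefModel y) (cem x y) := by
  intro hvalid
  have hcem := (mem_truthSet_cem_iff (universalPrefModel y) x y true).1
    (hvalid.symm ▸ Set.mem_univ true)
  rw [maxSet_universalPrefModel] at hcem
  rcases hcem with hsub | hsub
  · exact Bool.false_ne_true (hsub (a := false) (fun h => absurd h hxy) rfl)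
  · exact hsub (a := true) (fun _ => rfl) fun _ => rfl

/-- CEM is valid in all models with total antisymmetric preference, falsified in some
finite transitive total model, hence not a theorem of Åqvist's logic G. -/
theorem stmt11 {V : Type} (x y : V) (hxy : x ≠ y) :
    (∀ M : PrefModel V,
        (∀ a b : M.W, M.rel a b ∨ M.rel b a) →
        (∀ a b : M.W, M.rel a b → M.rel b a → a = b) →
        valid M (cem x y)) ∧
    (∃ M : PrefModel V, Finite M.W ∧ Transitive M.rel ∧
        (∀ a b : M.W, M.rel a b ∨ M.rel b a) ∧ ¬ valid M (cem x y)) ∧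
    ¬ (∀ M : PrefModel V, Transitive M.rel →
        (∀ a b : M.W, M.rel a b ∨ M.rel b a) → SmoothModel M →
        valid M (cem x y)) := by
  have htrans : Transitive (universalPrefModel y).rel := fun _ _ _ _ _ => trivial
  have htot : ∀ a b : (universalPrefModel y).W,
      (universalPrefModel y).rel a b ∨ (universalPrefModel y).rel b a :=
    fun _ _ => Or.inl trivial
  refine ⟨fun M => valid_cem_of_total_of_antisymm M x y, ?_, ?_⟩
  · exact ⟨universalPrefModel y, inferInstanceAs (Finite Bool), htrans, htot,
      not_valid_cem_universalPrefModel hxy⟩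
  · intro hG
    exact not_valid_cem_universalPrefModel hxy
      (hG _ htrans htot (smoothModel_universalPrefModel y))
end

section
/- Let the chain block be built from the sequence z₁, ..., zₘ = MaxSeq(M, U, A) with chain order zᵢ ⪰ᶜ zⱼ iff i ≤ j. Then the chain is (iv)-safe: for every element z_k of the chain and every α ∈ A, if there exists u ≻ z_k in M with M, u ⊨ α, then there exists an earlier element zⱼ (j < k) of the chain with M, zⱼ ⊨ α. -/
open scoped Classical in
/-- The iterative selection of maximal worlds for disjunctions of remaining conditions. -/
noncomputable def maxSeq {V : Type} (M : PrefModel V) (rep : Set M.W → M.W)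
    (hrep : ∀ S : Set M.W, S.Nonempty → rep S ∈ S)
    (U : Set M.W) (A : Finset (PForm V)) : List M.W :=
  if h : (U ∩ maxSet M.rel (⋃ α ∈ A, truthSet M α)).Nonempty then
    rep (U ∩ maxSet M.rel (⋃ α ∈ A, truthSet M α)) ::
      maxSeq M rep hrep U
        (A.filter fun α =>
          rep (U ∩ maxSet M.rel (⋃ α ∈ A, truthSet M α)) ∉ truthSet M α)
  else []
termination_by A.card
decreasing_by
  have hz := hrep _ h
  have hz2 : rep (U ∩ maxSet M.rel (⋃ α ∈ A, truthSet M α)) ∈ ⋃ α ∈ A, truthSet M α :=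
    hz.2.1
  simp only [Set.mem_iUnion] at hz2
  obtain ⟨α₀, hα₀A, hα₀⟩ := hz2
  exact Finset.card_lt_card
    (Finset.filter_ssubset.mpr ⟨α₀, hα₀A, by simp [hα₀]⟩)

/-! The `k`-th world `z_k` of `maxSeq` is ≻-maximal among the worlds satisfying some condition
of `A` that none of `z_0, …, z_{k-1}` satisfies: each step discards the conditions met by the
chosen world and picks the next one maximal in the disjunction of those that remain. Hence a world
`u ≻ z_k` satisfying `α ∈ A` shows that `α` was already met by an earlier `z_j`. -/

theorem Finset.card_filter_notMem_lt {ι W : Type} (s : ι → Set W) (A : Finset ι) {z : W}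
    (hz : z ∈ ⋃ a ∈ A, s a) [DecidablePred fun a => z ∉ s a] :
    (A.filter fun a => z ∉ s a).card < A.card := by
  obtain ⟨a, ha, hza⟩ := Set.mem_iUnion₂.mp hz
  exact Finset.card_lt_card (Finset.filter_ssubset.mpr ⟨a, ha, not_not.mpr hza⟩)

theorem not_strictRel_of_mem_maxSet {W : Type} {r : W → W → Prop} {S : Set W} {u v : W}
    (hv : v ∈ maxSet r S) (hu : u ∈ S) : ¬ strictRel r u v :=
  fun huv => hv.2 ⟨u, hu, huv⟩

section maxSeq

variable {V : Type} (M : PrefModel V) (rep : Set M.W → M.W)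
  (hrep : ∀ S : Set M.W, S.Nonempty → rep S ∈ S) (U : Set M.W)

open scoped Classical in
theorem maxSeq_of_nonempty (A : Finset (PForm V))
    (h : (U ∩ maxSet M.rel (⋃ α ∈ A, truthSet M α)).Nonempty) :
    maxSeq M rep hrep U A =
      rep (U ∩ maxSet M.rel (⋃ α ∈ A, truthSet M α)) ::
        maxSeq M rep hrep U
          (A.filter fun α =>
            rep (U ∩ maxSet M.rel (⋃ α ∈ A, truthSet M α)) ∉ truthSet M α) := by
  rw [maxSeq, dif_pos h]

theorem maxSeq_of_not_nonempty (A : Finset (PForm V))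
    (h : ¬ (U ∩ maxSet M.rel (⋃ α ∈ A, truthSet M α)).Nonempty) :
    maxSeq M rep hrep U A = [] := by
  rw [maxSeq, dif_neg h]

open scoped Classical in
theorem getElem_maxSeq_mem_maxSet (A : Finset (PForm V)) (k : ℕ)
    (hk : k < (maxSeq M rep hrep U A).length) :
    (maxSeq M rep hrep U A)[k] ∈ maxSet M.rel
      (⋃ α ∈ {α | α ∈ A ∧ ∀ z ∈ (maxSeq M rep hrep U A).take k, z ∉ truthSet M α},
        truthSet M α) := by
  by_cases hne : (U ∩ maxSet M.rel (⋃ α ∈ A, truthSet M α)).Nonempty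
  · have hz := hrep _ hne
    have := Finset.card_filter_notMem_lt (truthSet M) A hz.2.1
    simp only [maxSeq_of_nonempty M rep hrep U A hne] at hk ⊢
    cases k with
    | zero => simpa using hz.2
    | succ k =>
      simp only [List.getElem_cons_succ, List.take_succ_cons, List.forall_mem_cons]
      convert getElem_maxSeq_mem_maxSet _ k (by simpa using hk) using 4
      ext α
      simp [and_assoc]
  · simp [maxSeq_of_not_nonempty M rep hrep U A hne] at hk
termination_by A.card

end maxSeq

/-- The chain built on `maxSeq` is (iv)-safe: if some `u ≻ z_k` satisfies `α ∈ A`, then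
some earlier (more preferred) element of the chain satisfies `α`. -/
theorem stmt14 {V : Type} (M : PrefModel V) (rep : Set M.W → M.W)
    (hrep : ∀ S : Set M.W, S.Nonempty → rep S ∈ S)
    (U : Set M.W) (A : Finset (PForm V))
    (k : ℕ) (hk : k < (maxSeq M rep hrep U A).length)
    (α : PForm V) (hα : α ∈ A)
    (h : ∃ u : M.W, strictRel M.rel u ((maxSeq M rep hrep U A).get ⟨k, hk⟩) ∧
      u ∈ truthSet M α) :
    ∃ j : ℕ, ∃ hj : j < k,
      (maxSeq M rep hrep U A).get ⟨j, hj.trans hk⟩ ∈ truthSet M α := by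
  obtain ⟨u, hu, huα⟩ := h
  by_contra! hfresh
  have hαfresh : ∀ z ∈ (maxSeq M rep hrep U A).take k, z ∉ truthSet M α := by
    intro z hz
    obtain ⟨j, hj, rfl⟩ := List.mem_take_iff_getElem.mp hz
    exact hfresh j (lt_of_lt_of_le hj (min_le_left _ _))
  exact not_strictRel_of_mem_maxSet (getElem_maxSeq_mem_maxSet M rep hrep U A k hk)
    (Set.mem_biUnion ⟨hα, hαfresh⟩ huα) hu
end

section
/- Let M be a limited preference model and A a finite set of formulas. Then every formula α ∈ A that is satisfiable in M is satisfied by some element of MaxSeq(M, W, A): the maximal-chain selection from the full set of worlds covers all satisfiable conditions. -/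
def PForm.or {V : Type} (φ ψ : PForm V) : PForm V := .neg (.conj (.neg φ) (.neg ψ))

theorem truthSet_or {V : Type} (M : PrefModel V) (φ ψ : PForm V) :
    truthSet M (φ.or ψ) = truthSet M φ ∪ truthSet M ψ := by
  simp [PForm.or, truthSet, Set.compl_inter]

theorem exists_truthSet_eq_biUnion {V : Type} (M : PrefModel V) {A : Finset (PForm V)}
    (hA : A.Nonempty) : ∃ φ : PForm V, truthSet M φ = ⋃ α ∈ A, truthSet M α := by
  classical
  induction hA using Finset.Nonempty.cons_induction with
  | singleton a => exact ⟨a, by simp⟩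
  | cons a A _ _ ih =>
    obtain ⟨ψ, hψ⟩ := ih
    exact ⟨a.or ψ, by rw [truthSet_or, hψ, Finset.cons_eq_insert, Finset.set_biUnion_insert]⟩

theorem Limited.maxSet_biUnion_nonempty {V : Type} {M : PrefModel V} (hlim : Limited M)
    {A : Finset (PForm V)} (h : (⋃ α ∈ A, truthSet M α).Nonempty) :
    (maxSet M.rel (⋃ α ∈ A, truthSet M α)).Nonempty := by
  obtain ⟨α, hα, -⟩ := Set.nonempty_biUnion.mp h
  obtain ⟨φ, hφ⟩ := exists_truthSet_eq_biUnion M ⟨α, hα⟩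
  rw [← hφ] at h ⊢
  exact hlim φ h

theorem Finset.filter_notMem_ssubset_of_mem_biUnion {ι X : Type*} {s : Finset ι}
    {f : ι → Set X} {z : X} [DecidablePred fun i => z ∉ f i] (hz : z ∈ ⋃ i ∈ s, f i) :
    s.filter (fun i => z ∉ f i) ⊂ s := by
  obtain ⟨i, hi, hzi⟩ := Set.mem_iUnion₂.mp hz
  exact Finset.filter_ssubset.mpr ⟨i, hi, not_not.mpr hzi⟩

open scoped Classical in
theorem maxSeq_eq_cons {V : Type} {M : PrefModel V} {rep : Set M.W → M.W}
    {hrep : ∀ S : Set M.W, S.Nonempty → rep S ∈ S} {U : Set M.W} {A : Finset (PForm V)}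
    (h : (U ∩ maxSet M.rel (⋃ α ∈ A, truthSet M α)).Nonempty) :
    maxSeq M rep hrep U A =
      rep (U ∩ maxSet M.rel (⋃ α ∈ A, truthSet M α)) ::
        maxSeq M rep hrep U (A.filter fun α =>
          rep (U ∩ maxSet M.rel (⋃ α ∈ A, truthSet M α)) ∉ truthSet M α) := by
  rw [maxSeq, dif_pos h]

/-- In a limited model, every formula of `A` satisfiable in `M` is satisfied by some
element of the maximal chain selected from all worlds. -/
theorem stmt15 {V : Type} (M : PrefModel V) (hlim : Limited M)
    (rep : Set M.W → M.W) (hrep : ∀ S : Set M.W, S.Nonempty → rep S ∈ S)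
    (A : Finset (PForm V)) (α : PForm V) (hα : α ∈ A)
    (hsat : (truthSet M α).Nonempty) :
    ∃ z ∈ maxSeq M rep hrep Set.univ A, z ∈ truthSet M α := by
  classical
  induction A using Finset.strongInduction with
  | H A ih =>
    set S := Set.univ ∩ maxSet M.rel (⋃ β ∈ A, truthSet M β) with hS_def
    have hS : S.Nonempty := by
      rw [hS_def, Set.univ_inter]
      exact hlim.maxSet_biUnion_nonempty ⟨_, Set.mem_biUnion hα hsat.some_mem⟩
    rw [maxSeq_eq_cons hS]
    by_cases hzα : rep S ∈ truthSet M α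
    · exact ⟨rep S, List.mem_cons_self, hzα⟩
    · have hsub := Finset.filter_notMem_ssubset_of_mem_biUnion (hrep S hS).2.1
      obtain ⟨z, hz, hzα'⟩ := ih _ hsub (Finset.mem_filter.mpr ⟨hα, hzα⟩)
      exact ⟨z, List.mem_cons_of_mem _ hz, hzα'⟩
end

section
/- For any formula φ of Åqvist's language: φ is valid in all preference models with W finite and ⪰ transitive if and only if φ is valid in all smooth preference models with ⪰ transitive. -/
/-!
Restricting a model to a set `S` of worlds preserves the truth of every subformula of `φ` as
soon as `S` contains a refuting world for each false `□`- and `◯`-subformula, and every world of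
`S ∩ ⟦α⟧` that is not maximal in `⟦α⟧` is strictly below some world of `S ∩ ⟦α⟧`. In a smooth
model such a dominating world can be chosen maximal in `⟦α⟧`; closing a finite seed set under
these choices stays finite, because once a path has reached a maximal world of `⟦α⟧`, every later
world lies strictly above it and hence outside `⟦α⟧`, so each `α` is used at most once along a
path. Conversely, `≻` is well founded on a finite transitive model, which yields smoothness.
-/

section StrictRel

variable {W : Type} {r : W → W → Prop}

instance [IsTrans W r] : IsTrans W (strictRel r) :=
  ⟨fun _ _ _ hab hbc => ⟨_root_.trans hab.1 hbc.1, fun hca => hbc.2 (_root_.trans hca hab.1)⟩⟩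

instance : Std.Irrefl (strictRel r) := ⟨fun _ h => h.2 h.1⟩

lemma exists_mem_maxSet_of_wellFounded [IsTrans W r] (hwf : WellFounded (strictRel r))
    {U : Set W} {w : W} (hw : w ∈ U) : ∃ u ∈ maxSet r U, u = w ∨ strictRel r u w := by
  obtain ⟨m, ⟨hmU, hmw⟩, hmin⟩ :=
    hwf.has_min {u | u ∈ U ∧ (u = w ∨ strictRel r u w)} ⟨w, hw, Or.inl rfl⟩
  refine ⟨m, ⟨hmU, ?_⟩, hmw⟩
  rintro ⟨u, huU, hum⟩
  refine hmin u ⟨huU, Or.inr ?_⟩ hum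
  rcases hmw with rfl | hmw
  exacts [hum, _root_.trans hum hmw]

lemma maxSet_preimage_val {S U : Set W}
    (hdom : ∀ v ∈ S ∩ U, v ∉ maxSet r U → ∃ u ∈ S ∩ U, strictRel r u v) :
    maxSet (fun a b : S => r a b) (Subtype.val ⁻¹' U) = Subtype.val ⁻¹' maxSet r U := by
  ext ⟨v, hv⟩
  constructor
  · rintro ⟨hvU, hnot⟩
    by_contra hvmax
    obtain ⟨u, ⟨huS, huU⟩, huv⟩ := hdom v ⟨hv, hvU⟩ hvmax
    exact hnot ⟨⟨u, huS⟩, huU, huv⟩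
  · rintro ⟨hvU, hnot⟩
    exact ⟨hvU, fun ⟨u, huU, huv⟩ => hnot ⟨u, huU, huv⟩⟩

end StrictRel

theorem smoothModel_of_finite {V : Type} (M : PrefModel V) [Finite M.W] [IsTrans M.W M.rel] :
    SmoothModel M :=
  fun _ _ => exists_mem_maxSet_of_wellFounded (Finite.wellFounded_of_trans_of_irrefl _)

def IsAboveMax {W : Type} (r : W → W → Prop) (U : Set W) (v : W) : Prop :=
  ∃ m ∈ maxSet r U, v = m ∨ strictRel r v m

lemma Relation.finite_setOf_reflTransGen {α : Type} {R : α → α → Prop} (f : α → ℕ)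
    (hf : ∀ a b, R a b → f b < f a) (hR : ∀ a, {b | R a b}.Finite) (a : α) :
    {b | Relation.ReflTransGen R a b}.Finite := by
  induction hn : f a using Nat.strong_induction_on generalizing a with
  | _ n ih =>
    subst hn
    refine (((hR a).biUnion fun b hab => ih (f b) (hf a b hab) b rfl).insert a).subset ?_
    intro c hac
    rcases hac.cases_head with rfl | ⟨b, hab, hbc⟩
    exacts [Set.mem_insert _ _, Set.mem_insert_of_mem _ (Set.mem_biUnion hab hbc)]

section DomClosure

variable {ι W : Type} (r : W → W → Prop) (U : ι → Set W) (A : Set ι) (sel : ι → W → W)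

def DomStep (v u : W) : Prop :=
  ∃ i ∈ A, v ∈ U i ∧ v ∉ maxSet r (U i) ∧ u = sel i v

def domClosure (S₀ : Set W) : Set W :=
  {u | ∃ s ∈ S₀, Relation.ReflTransGen (DomStep r U A sel) s u}

variable {r U A sel}

lemma subset_domClosure (S₀ : Set W) : S₀ ⊆ domClosure r U A sel S₀ :=
  fun s hs => ⟨s, hs, .refl⟩

variable (hsel : ∀ i ∈ A, ∀ v ∈ U i, v ∉ maxSet r (U i) →
  sel i v ∈ maxSet r (U i) ∧ strictRel r (sel i v) v)
include hsel

lemma domClosure_dominated (S₀ : Set W) (i : ι) (hi : i ∈ A) :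
    ∀ v ∈ domClosure r U A sel S₀ ∩ U i, v ∉ maxSet r (U i) →
      ∃ u ∈ domClosure r U A sel S₀ ∩ U i, strictRel r u v := by
  rintro v ⟨⟨s, hs, hsv⟩, hvU⟩ hvmax
  obtain ⟨hmax, hstrict⟩ := hsel i hi v hvU hvmax
  exact ⟨sel i v, ⟨⟨s, hs, hsv.tail ⟨i, hi, hvU, hvmax, rfl⟩⟩, hmax.1⟩, hstrict⟩

lemma DomStep.ncard_not_isAboveMax_lt [IsTrans W r] (hA : A.Finite) {v u : W}
    (h : DomStep r U A sel v u) :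
    {i ∈ A | ¬ IsAboveMax r (U i) u}.ncard < {i ∈ A | ¬ IsAboveMax r (U i) v}.ncard := by
  obtain ⟨i, hi, hvU, hvmax, rfl⟩ := h
  obtain ⟨hmax, hstrict⟩ := hsel i hi v hvU hvmax
  refine Set.ncard_lt_ncard ?_ (hA.subset (Set.sep_subset _ _))
  refine (Set.ssubset_iff_of_subset ?_).2 ⟨i, ⟨hi, ?_⟩, fun h => h.2 ⟨_, hmax, Or.inl rfl⟩⟩
  · rintro j ⟨hj, hnot⟩
    refine ⟨hj, fun ⟨m, hm, hvm⟩ => hnot ⟨m, hm, Or.inr ?_⟩⟩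
    rcases hvm with rfl | hvm
    exacts [hstrict, _root_.trans hstrict hvm]
  · rintro ⟨m, hm, rfl | hvm⟩
    · exact hvmax hm
    · exact hm.2 ⟨v, hvU, hvm⟩

lemma domClosure_finite [IsTrans W r] (hA : A.Finite) {S₀ : Set W} (hS₀ : S₀.Finite) :
    (domClosure r U A sel S₀).Finite := by
  have hbranch (v : W) : {u | DomStep r U A sel v u}.Finite :=
    (hA.image (sel · v)).subset fun _ ⟨i, hi, _, _, hu⟩ => ⟨i, hi, hu.symm⟩
  refine (hS₀.biUnion fun s _ =>
    Relation.finite_setOf_reflTransGen (fun v => {i ∈ A | ¬ IsAboveMax r (U i) v}.ncard)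
      (fun _ _ => DomStep.ncard_not_isAboveMax_lt hsel hA) hbranch s).subset ?_
  exact fun u ⟨s, hs, hsu⟩ => Set.mem_biUnion hs hsu

end DomClosure

lemma mem_subf_self {V : Type} (ψ : PForm V) : ψ ∈ Subf ψ := by
  cases ψ <;> simp [Subf]

lemma finite_subf {V : Type} (φ : PForm V) : (Subf φ).Finite := by
  induction φ with
  | var x => exact Set.finite_singleton _
  | neg ψ ih => exact ih.insert _
  | conj ψ₁ ψ₂ ih₁ ih₂ => exact (ih₁.union ih₂).insert _
  | box β ih => exact ih.insert _
  | ob γ α ih₁ ih₂ => exact (ih₁.union ih₂).insert _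

namespace PrefModel

variable {V : Type} (M : PrefModel V)

abbrev restrict (S : Set M.W) : PrefModel V where
  W := S
  rel a b := M.rel a b
  val p := Subtype.val ⁻¹' M.val p

instance [IsTrans M.W M.rel] (S : Set M.W) : IsTrans (M.restrict S).W (M.restrict S).rel :=
  ⟨fun _ _ _ => _root_.trans (r := M.rel)⟩

noncomputable def refuter [Nonempty M.W] : PForm V → M.W
  | .box β => Classical.epsilon fun w => w ∉ truthSet M β
  | .ob γ α => Classical.epsilon fun w => w ∈ maxSet M.rel (truthSet M α) ∧ w ∉ truthSet M γ
  | _ => Classical.arbitrary _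

variable {M}

lemma truthSet_eq_univ_of_refuter_mem [Nonempty M.W] {β : PForm V}
    (h : M.refuter (.box β) ∈ truthSet M β) : truthSet M β = Set.univ := by
  by_contra hne
  obtain ⟨w, hw⟩ := (Set.ne_univ_iff_exists_notMem _).1 hne
  exact Classical.epsilon_spec (p := fun w => w ∉ truthSet M β) ⟨w, hw⟩ h

lemma maxSet_subset_of_refuter_mem [Nonempty M.W] {γ α : PForm V}
    (h : M.refuter (.ob γ α) ∈ maxSet M.rel (truthSet M α) →
      M.refuter (.ob γ α) ∈ truthSet M γ) :
    maxSet M.rel (truthSet M α) ⊆ truthSet M γ := by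
  by_contra hns
  obtain ⟨w, hw⟩ := Set.not_subset.1 hns
  obtain ⟨hmax, hγ⟩ := Classical.epsilon_spec
    (p := fun w => w ∈ maxSet M.rel (truthSet M α) ∧ w ∉ truthSet M γ) ⟨w, hw⟩
  exact hγ (h hmax)

end PrefModel

lemma SmoothModel.exists_dominator {V : Type} {M : PrefModel V} (hsm : SmoothModel M) :
    ∃ sel : PForm V → M.W → M.W, ∀ α v, v ∈ truthSet M α → v ∉ maxSet M.rel (truthSet M α) →
      sel α v ∈ maxSet M.rel (truthSet M α) ∧ strictRel M.rel (sel α v) v := by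
  have (α : PForm V) (v : M.W) : ∃ u, v ∈ truthSet M α → v ∉ maxSet M.rel (truthSet M α) →
      u ∈ maxSet M.rel (truthSet M α) ∧ strictRel M.rel u v := by
    by_cases hv : v ∈ truthSet M α
    · obtain ⟨u, hu, huv⟩ := hsm α v hv
      exact ⟨u, fun _ hvmax => ⟨hu, huv.resolve_left fun h => hvmax (h ▸ hu)⟩⟩
    · exact ⟨v, fun h => absurd h hv⟩
  choose sel hsel using this
  exact ⟨sel, hsel⟩


theorem truthSet_restrict {V : Type} {M : PrefModel V} {S : Set M.W} {φ : PForm V}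
    (hbox : ∀ β, .box β ∈ Subf φ → S ⊆ truthSet M β → truthSet M β = Set.univ)
    (hob : ∀ γ α, .ob γ α ∈ Subf φ → S ∩ maxSet M.rel (truthSet M α) ⊆ truthSet M γ →
      maxSet M.rel (truthSet M α) ⊆ truthSet M γ)
    (hdom : ∀ α ∈ Subf φ, ∀ v ∈ S ∩ truthSet M α, v ∉ maxSet M.rel (truthSet M α) →
      ∃ u ∈ S ∩ truthSet M α, strictRel M.rel u v) :
    ∀ ψ, Subf ψ ⊆ Subf φ → truthSet (M.restrict S) ψ = Subtype.val ⁻¹' truthSet M ψ := by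
  intro ψ
  induction ψ with
  | var x => intro _; rfl
  | neg ψ ih =>
    intro h
    simp only [truthSet, ih ((Set.subset_insert _ _).trans h), Set.preimage_compl]
  | conj ψ₁ ψ₂ ih₁ ih₂ =>
    intro h
    have h' : Subf ψ₁ ∪ Subf ψ₂ ⊆ Subf φ := (Set.subset_insert _ _).trans h
    simp only [truthSet, ih₁ (Set.subset_union_left.trans h'),
      ih₂ (Set.subset_union_right.trans h'), Set.preimage_inter]
  | box β ih =>
    intro h
    ext x
    show truthSet (M.restrict S) β = Set.univ ↔ truthSet M β = Set.univ
    rw [ih ((Set.subset_insert _ _).trans h), Set.preimage_eq_univ_iff, Subtype.range_coe]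
    exact ⟨hbox β (h (mem_subf_self _)), fun hβ => hβ ▸ Set.subset_univ S⟩
  | ob γ α ih₁ ih₂ =>
    intro h
    have h' : Subf γ ∪ Subf α ⊆ Subf φ := (Set.subset_insert _ _).trans h
    ext x
    show maxSet (M.restrict S).rel (truthSet (M.restrict S) α) ⊆ truthSet (M.restrict S) γ ↔
      maxSet M.rel (truthSet M α) ⊆ truthSet M γ
    rw [ih₁ (Set.subset_union_left.trans h'), ih₂ (Set.subset_union_right.trans h'),
      maxSet_preimage_val (hdom α (h' (Or.inr (mem_subf_self α)))),
      Subtype.preimage_val_subset_preimage_val_iff]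
    exact ⟨fun hS => hob γ α (h (mem_subf_self _)) fun v hv => (hS hv).2,
      fun hmax => Set.inter_subset_inter_right S hmax⟩

theorem exists_finite_countermodel {V : Type} {M : PrefModel V} [IsTrans M.W M.rel]
    (hsm : SmoothModel M) {φ : PForm V} {w₀ : M.W} (hw₀ : w₀ ∉ truthSet M φ) :
    ∃ M' : PrefModel V, Finite M'.W ∧ IsTrans M'.W M'.rel ∧ ¬ valid M' φ := by
  have : Nonempty M.W := ⟨w₀⟩
  obtain ⟨sel, hsel⟩ := hsm.exists_dominator
  have hsel' : ∀ α ∈ Subf φ, ∀ v ∈ truthSet M α, v ∉ maxSet M.rel (truthSet M α) →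
      sel α v ∈ maxSet M.rel (truthSet M α) ∧ strictRel M.rel (sel α v) v :=
    fun α _ => hsel α
  set S₀ := insert w₀ (M.refuter '' Subf φ)
  set S := domClosure M.rel (truthSet M) (Subf φ) sel S₀
  have hw₀S : w₀ ∈ S := subset_domClosure S₀ (Set.mem_insert _ _)
  have hrefuter {ψ : PForm V} (hψ : ψ ∈ Subf φ) : M.refuter ψ ∈ S :=
    subset_domClosure S₀ (Set.mem_insert_of_mem _ ⟨ψ, hψ, rfl⟩)
  have htruth := truthSet_restrict (S := S) (φ := φ)
    (fun _ hβ hS => PrefModel.truthSet_eq_univ_of_refuter_mem (hS (hrefuter hβ)))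
    (fun _ _ hob hS => PrefModel.maxSet_subset_of_refuter_mem fun hmax => hS ⟨hrefuter hob, hmax⟩)
    (fun α hα => domClosure_dominated hsel' S₀ α hα) φ subset_rfl
  refine ⟨M.restrict S, (domClosure_finite hsel' (finite_subf φ)
    (((finite_subf φ).image _).insert w₀)).to_subtype, inferInstance, fun hval => hw₀ ?_⟩
  have : (⟨w₀, hw₀S⟩ : S) ∈ truthSet (M.restrict S) φ := hval ▸ Set.mem_univ _
  rwa [htruth] at this

/-- A formula is valid in all finite transitive preference models iff it is valid in all
smooth transitive preference models. -/
theorem stmt17 {V : Type} (φ : PForm V) :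
    (∀ M : PrefModel V, Finite M.W → Transitive M.rel → valid M φ) ↔
    (∀ M : PrefModel V, SmoothModel M → Transitive M.rel → valid M φ) := by
  constructor
  · intro hfin M hsm htr
    have : IsTrans M.W M.rel := ⟨fun _ _ _ => @htr _ _ _⟩
    by_contra hval
    obtain ⟨w₀, hw₀⟩ := (Set.ne_univ_iff_exists_notMem _).1 hval
    obtain ⟨M', hfin', htr', hval'⟩ := exists_finite_countermodel hsm hw₀
    exact hval' (hfin M' hfin' fun _ _ _ => _root_.trans)
  · intro hsm M hfin htr
    have : IsTrans M.W M.rel := ⟨fun _ _ _ => @htr _ _ _⟩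
    exact hsm M (smoothModel_of_finite M) htr
end
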